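/- arXiv:0802.4051 — 7 statements merged into one kernel-verified Lean document; each statement's English description precedes it below -/
import Mathlib

section
/- Continuity in the state: let K be a compact convex set, D a distance on K satisfying the triangle inequality and convexity in the first argument, and E : K → ℝ≥0 convex and bounded by M. Then for any ε > 0 and states ρ₁, ρ₂ with η = D(ρ₁,ρ₂), one has |E_ε(ρ₂) − E_ε(ρ₁)| ≤ (η/(ε+η))·M. In particular ρ ↦ E_ε(ρ) is continuous for every fixed ε > 0, even if E itself is discontinuous. -/
/-! Take a minimiser `σ₁` for `E_ε(ρ₁)` and slide it towards `ρ₂`: with `p = η / (ε + η)`, the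
mixture `(1 - p) σ₁ + p ρ₂` is within `(1 - p) (ε + η) = ε` of `ρ₂` by convexity of `D`, so it is
admissible for `E_ε(ρ₂)`, and by convexity of `E` its value is at most `E(σ₁) + p M`. Swapping the
roles of `ρ₁` and `ρ₂` gives the bound on the absolute value. -/

lemma one_sub_div_add_mul_add {ε η : ℝ} (hε : 0 ≤ ε) (hη : 0 ≤ η) :
    (1 - η / (ε + η)) * (ε + η) = ε := by
  rw [sub_mul, one_mul, div_mul_cancel_of_imp fun h => by linarith]
  ring

section

variable {V : Type*} [AddCommGroup V] [Module ℝ V] {K : Set V} {D : V → V → ℝ}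

lemma dist_mix_le_of_convex (hDsymm : ∀ ρ σ, D ρ σ = D σ ρ)
    (hDtri : ∀ ρ σ τ, D ρ τ ≤ D ρ σ + D σ τ)
    (hDconv : ∀ ρ ∈ K, ∀ σ ∈ K, ∀ p : ℝ, 0 ≤ p → p ≤ 1 →
      D (p • σ + (1 - p) • ρ) ρ ≤ p * D σ ρ)
    {ε : ℝ} {ρ₁ ρ₂ σ : V} (hρ₂ : ρ₂ ∈ K) (hσ : σ ∈ K) (hσD : D ρ₁ σ ≤ ε)
    {t : ℝ} (ht₀ : 0 ≤ t) (ht₁ : t ≤ 1) (ht : t * (ε + D ρ₁ ρ₂) = ε) :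
    D ρ₂ (t • σ + (1 - t) • ρ₂) ≤ ε := by
  have hσρ₂ : D σ ρ₂ ≤ ε + D ρ₁ ρ₂ := by
    linarith [hDtri σ ρ₁ ρ₂, hDsymm σ ρ₁]
  calc D ρ₂ (t • σ + (1 - t) • ρ₂)
      = D (t • σ + (1 - t) • ρ₂) ρ₂ := hDsymm _ _
    _ ≤ t * D σ ρ₂ := hDconv ρ₂ hρ₂ σ hσ t ht₀ ht₁
    _ ≤ t * (ε + D ρ₁ ρ₂) := mul_le_mul_of_nonneg_left hσρ₂ ht₀
    _ = ε := ht

lemma sub_le_of_isLeast_smoothed (hKc : Convex ℝ K)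
    (hDnn : ∀ ρ σ, 0 ≤ D ρ σ) (hDsymm : ∀ ρ σ, D ρ σ = D σ ρ)
    (hDtri : ∀ ρ σ τ, D ρ τ ≤ D ρ σ + D σ τ)
    (hDconv : ∀ ρ ∈ K, ∀ σ ∈ K, ∀ p : ℝ, 0 ≤ p → p ≤ 1 →
      D (p • σ + (1 - p) • ρ) ρ ≤ p * D σ ρ)
    {E : V → ℝ} (hEnn : ∀ σ ∈ K, 0 ≤ E σ)
    (hEconv : ∀ σ₁ ∈ K, ∀ σ₂ ∈ K, ∀ p : ℝ, 0 ≤ p → p ≤ 1 →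
      E (p • σ₁ + (1 - p) • σ₂) ≤ p * E σ₁ + (1 - p) * E σ₂)
    {M : ℝ} (hM : ∀ σ ∈ K, E σ ≤ M) {ε : ℝ} {Eeps : V → ℝ}
    (hEeps : ∀ ρ ∈ K, IsLeast (E '' {σ ∈ K | D ρ σ ≤ ε}) (Eeps ρ))
    {ρ₁ ρ₂ : V} (hρ₁ : ρ₁ ∈ K) (hρ₂ : ρ₂ ∈ K) :
    Eeps ρ₂ - Eeps ρ₁ ≤ (D ρ₁ ρ₂ / (ε + D ρ₁ ρ₂)) * M := by
  obtain ⟨⟨σ₁, ⟨hσ₁K, hσ₁D⟩, hσ₁E⟩, -⟩ := hEeps ρ₁ hρ₁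
  set η := D ρ₁ ρ₂
  set p := η / (ε + η)
  have hε : 0 ≤ ε := (hDnn ρ₁ σ₁).trans hσ₁D
  have hη : 0 ≤ η := hDnn ρ₁ ρ₂
  have hp₀ : 0 ≤ p := by positivity
  have hp₁ : p ≤ 1 := div_le_one_of_le₀ (by linarith) (by positivity)
  have hmixK : (1 - p) • σ₁ + (1 - (1 - p)) • ρ₂ ∈ K :=
    hKc hσ₁K hρ₂ (by linarith) (by linarith) (by ring)
  have hmixD : D ρ₂ ((1 - p) • σ₁ + (1 - (1 - p)) • ρ₂) ≤ ε :=
    dist_mix_le_of_convex hDsymm hDtri hDconv hρ₂ hσ₁K hσ₁D (by linarith) (by linarith)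
      (one_sub_div_add_mul_add hε hη)
  have hmixE := hEconv σ₁ hσ₁K ρ₂ hρ₂ (1 - p) (by linarith) (by linarith)
  have hEeps₂ : Eeps ρ₂ ≤ E ((1 - p) • σ₁ + (1 - (1 - p)) • ρ₂) :=
    (hEeps ρ₂ hρ₂).2 ⟨_, ⟨hmixK, hmixD⟩, rfl⟩
  nlinarith [hEnn σ₁ hσ₁K, hM ρ₂ hρ₂]

end

theorem stmt5_general {V : Type*} [NormedAddCommGroup V] [NormedSpace ℝ V]
    (K : Set V) (hKc : Convex ℝ K)
    (D : V → V → ℝ) (hDnn : ∀ ρ σ, 0 ≤ D ρ σ)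
    (hDsymm : ∀ ρ σ, D ρ σ = D σ ρ)
    (hDtri : ∀ ρ σ τ, D ρ τ ≤ D ρ σ + D σ τ)
    (hDconv : ∀ ρ ∈ K, ∀ σ ∈ K, ∀ p : ℝ, 0 ≤ p → p ≤ 1 →
      D (p • σ + (1 - p) • ρ) ρ ≤ p * D σ ρ)
    (E : V → ℝ) (hEnn : ∀ σ ∈ K, 0 ≤ E σ)
    (hEconv : ∀ σ₁ ∈ K, ∀ σ₂ ∈ K, ∀ p : ℝ, 0 ≤ p → p ≤ 1 →
      E (p • σ₁ + (1 - p) • σ₂) ≤ p * E σ₁ + (1 - p) * E σ₂)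
    (M : ℝ) (hM : ∀ σ ∈ K, E σ ≤ M)
    (ε : ℝ)
    (Eeps : V → ℝ)
    (hEeps : ∀ ρ ∈ K, IsLeast (E '' {σ ∈ K | D ρ σ ≤ ε}) (Eeps ρ))
    (ρ₁ : V) (hρ₁ : ρ₁ ∈ K) (ρ₂ : V) (hρ₂ : ρ₂ ∈ K) :
    |Eeps ρ₂ - Eeps ρ₁| ≤ (D ρ₁ ρ₂ / (ε + D ρ₁ ρ₂)) * M := by
  rw [abs_sub_le_iff]
  constructor
  · exact sub_le_of_isLeast_smoothed hKc hDnn hDsymm hDtri hDconv hEnn hEconv hM hEeps hρ₁ hρ₂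
  · simpa only [hDsymm ρ₂ ρ₁] using
      sub_le_of_isLeast_smoothed hKc hDnn hDsymm hDtri hDconv hEnn hEconv hM hEeps hρ₂ hρ₁

/-- Continuity in the state: for ε > 0 and η = D(ρ₁,ρ₂),
`|E_ε(ρ₂) − E_ε(ρ₁)| ≤ (η/(ε+η))·M`, where `M` bounds `E` on `K`. -/
theorem stmt5 {V : Type*} [NormedAddCommGroup V] [NormedSpace ℝ V]
    (K : Set V) (hK : IsCompact K) (hKc : Convex ℝ K)
    (D : V → V → ℝ) (hDnn : ∀ ρ σ, 0 ≤ D ρ σ) (hD0 : ∀ ρ σ, D ρ σ = 0 ↔ ρ = σ)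
    (hDsymm : ∀ ρ σ, D ρ σ = D σ ρ)
    (hDtri : ∀ ρ σ τ, D ρ τ ≤ D ρ σ + D σ τ)
    (hDconv : ∀ ρ ∈ K, ∀ σ ∈ K, ∀ p : ℝ, 0 ≤ p → p ≤ 1 →
      D (p • σ + (1 - p) • ρ) ρ ≤ p * D σ ρ)
    (E : V → ℝ) (hEnn : ∀ σ ∈ K, 0 ≤ E σ)
    (hEconv : ∀ σ₁ ∈ K, ∀ σ₂ ∈ K, ∀ p : ℝ, 0 ≤ p → p ≤ 1 →
      E (p • σ₁ + (1 - p) • σ₂) ≤ p * E σ₁ + (1 - p) * E σ₂)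
    (M : ℝ) (hM : ∀ σ ∈ K, E σ ≤ M)
    (ε : ℝ) (hε : 0 < ε)
    (Eeps : V → ℝ)
    (hEeps : ∀ ρ ∈ K, IsLeast (E '' {σ ∈ K | D ρ σ ≤ ε}) (Eeps ρ))
    (ρ₁ : V) (hρ₁ : ρ₁ ∈ K) (ρ₂ : V) (hρ₂ : ρ₂ ∈ K) :
    |Eeps ρ₂ - Eeps ρ₁| ≤ (D ρ₁ ρ₂ / (ε + D ρ₁ ρ₂)) * M :=
  stmt5_general K hKc D hDnn hDsymm hDtri hDconv E hEnn hEconv M hM ε Eeps hEeps ρ₁ hρ₁ ρ₂ hρ₂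
end

section
/- Abstract continuity theorem: on a compact convex subset K of ℝⁿ with a convex distance D (metric, convex in each argument), any convex bounded functional E : K → ℝ≥0 gives rise to a function (ε,ρ) ↦ E_ε(ρ) := inf{E(σ) : D(ρ,σ) ≤ ε} that is jointly continuous on (0,∞) × K. -/
/-!
`E_ε(ρ)` is antitone in `ε`, and pulling a feasible `σ` towards the centre `ρ` gives
`E_{ε-η}(ρ) ≤ E_ε(ρ) + (η/ε) M`; so it is continuous in `ε`, locally uniformly in `ρ`.
Continuity in `ρ` is the delicate part, since `D` may jump at the relative boundary of `K`.
The convex function `D(c, ·)` is bounded near a relative interior point `c`, and convexity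
together with the triangle inequality spreads this into a global bound `B` on `D` and a Lipschitz
bound for `D(·, σ)` whenever `σ` is deep in `K`. Mixing a feasible `σ` with `c` in proportion `q`
makes it deep at the cost of `q B` in the radius and `q M` in the value, so moving the centre
slightly changes `E_ε` little once the radius is enlarged slightly.
-/

open Set Metric

theorem continuousOn_of_antitoneOn_of_transport {X : Type*} [PseudoMetricSpace X] {K : Set X}
    {F : ℝ → X → ℝ} {M : ℝ} (hM : 0 ≤ M) (hanti : ∀ ρ ∈ K, AntitoneOn (F · ρ) (Ici 0))
    (hscale : ∀ ρ ∈ K, ∀ ε η : ℝ, 0 ≤ η → η ≤ ε → F (ε - η) ρ ≤ F ε ρ + η / ε * M)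
    (htransport : ∀ θ > 0, ∃ δ > 0, ∀ x ∈ K, ∀ y ∈ K, dist x y < δ →
      ∀ ε ≥ 0, F (ε + θ) x ≤ F ε y + θ) :
    ContinuousOn (fun q : ℝ × X => F q.1 q.2) (Ioi 0 ×ˢ K) := by
  rw [Metric.continuousOn_iff]
  rintro ⟨ε₀, ρ₀⟩ ⟨hε₀, hρ₀⟩ τ hτ
  change 0 < ε₀ at hε₀
  set k := 2 * M / ε₀ + 1
  have hk : 0 < k := by positivity
  set θ := min (ε₀ / 2) (τ / (2 * k))
  have hθ : 0 < θ := by positivity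
  have hθε₀ : θ ≤ ε₀ / 2 := min_le_left _ _
  have hθτ : θ * k < τ := by
    calc θ * k ≤ τ / (2 * k) * k := by gcongr; exact min_le_right _ _
      _ < τ := by field_simp; linarith
  obtain ⟨δ, hδ, hδF⟩ := htransport θ hθ
  refine ⟨min θ δ, lt_min hθ hδ, ?_⟩
  rintro ⟨ε, ρ⟩ ⟨hε, hρ⟩ hdist
  change 0 < ε at hε
  rw [Prod.dist_eq, max_lt_iff] at hdist
  obtain ⟨hεε₀, hρρ₀⟩ := hdist
  rw [lt_min_iff, Real.dist_eq, abs_sub_lt_iff] at hεε₀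
  obtain ⟨⟨hεθ, hεθ'⟩, -⟩ := hεε₀
  have hρδ : dist ρ ρ₀ < δ := hρρ₀.trans_le (min_le_right _ _)
  have hupper : F ε ρ ≤ F ε₀ ρ₀ + θ * k := calc
    F ε ρ ≤ F (ε₀ - 2 * θ + θ) ρ := hanti ρ hρ (by simp only [mem_Ici]; linarith)
        (by simp only [mem_Ici]; linarith) (by linarith)
    _ ≤ F (ε₀ - 2 * θ) ρ₀ + θ := hδF ρ hρ ρ₀ hρ₀ hρδ _ (by linarith)
    _ ≤ F ε₀ ρ₀ + 2 * θ / ε₀ * M + θ := by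
        gcongr; exact hscale ρ₀ hρ₀ ε₀ (2 * θ) (by linarith) (by linarith)
    _ = F ε₀ ρ₀ + θ * k := by simp only [k]; ring
  have hlower : F ε₀ ρ₀ ≤ F ε ρ + θ * k := calc
    F ε₀ ρ₀ = F (ε₀ + 2 * θ - 2 * θ) ρ₀ := by ring_nf
    _ ≤ F (ε₀ + 2 * θ) ρ₀ + 2 * θ / (ε₀ + 2 * θ) * M :=
        hscale ρ₀ hρ₀ _ _ (by linarith) (by linarith)
    _ ≤ F (ε + θ) ρ₀ + 2 * θ / ε₀ * M := by
        gcongr ?_ + ?_ * M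
        · exact hanti ρ₀ hρ₀ (by simp only [mem_Ici]; linarith) (by simp only [mem_Ici]; linarith)
            (by linarith)
        · gcongr
          linarith
    _ ≤ F ε ρ + θ + 2 * θ / ε₀ * M := by
        gcongr; exact hδF ρ₀ hρ₀ ρ hρ (by rwa [dist_comm]) _ hε.le
    _ = F ε ρ + θ * k := by simp only [k]; ring
  rw [Real.dist_eq, abs_sub_lt_iff]
  constructor <;> linarith

section Convexity

variable {X : Type*} [AddCommGroup X] [Module ℝ X] {K : Set X} {f : X → ℝ}

theorem ConvexOn.of_forall_one_sub (hK : Convex ℝ K)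
    (h : ∀ x ∈ K, ∀ y ∈ K, ∀ p : ℝ, 0 ≤ p → p ≤ 1 →
      f (p • x + (1 - p) • y) ≤ p * f x + (1 - p) * f y) :
    ConvexOn ℝ K f := by
  refine ⟨hK, fun x hx y hy a b ha hb hab => ?_⟩
  obtain rfl : b = 1 - a := by linarith
  exact h x hx y hy a ha (by linarith)

theorem ConvexOn.le_one_sub (hf : ConvexOn ℝ K f) {x y : X} (hx : x ∈ K) (hy : y ∈ K) {p : ℝ}
    (hp0 : 0 ≤ p) (hp1 : p ≤ 1) : f (p • x + (1 - p) • y) ≤ p * f x + (1 - p) * f y :=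
  hf.2 hx hy hp0 (by linarith) (by ring)

structure IsConvexPseudometricOn (K : Set X) (D : X → X → ℝ) : Prop where
  self_eq_zero : ∀ x, D x x = 0
  symm : ∀ x y, D x y = D y x
  triangle : ∀ x y z, D x z ≤ D x y + D y z
  convexOn : ∀ ρ ∈ K, ConvexOn ℝ K (D · ρ)

end Convexity

section DeepPoints

variable {X : Type*} [NormedAddCommGroup X] [NormedSpace ℝ X] {K : Set X}

def IsDeepIn (K : Set X) (s : ℝ) (z : X) : Prop :=
  ∀ v ∈ vectorSpan ℝ K, ‖v‖ ≤ s → z + v ∈ K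

theorem sub_mem_vectorSpan {x y : X} (hx : x ∈ K) (hy : y ∈ K) : x - y ∈ vectorSpan ℝ K :=
  vsub_mem_vectorSpan ℝ hx hy

namespace IsDeepIn

variable {s : ℝ} {z : X}

theorem mem (h : IsDeepIn K s z) (hs : 0 ≤ s) : z ∈ K := by
  simpa using h 0 (Submodule.zero_mem _) (by simpa using hs)

theorem mono (h : IsDeepIn K s z) {t : ℝ} (hts : t ≤ s) : IsDeepIn K t z :=
  fun v hv hvt => h v hv (hvt.trans hts)

theorem convexCombination (hK : Convex ℝ K) (hz : IsDeepIn K s z) {σ : X} (hσ : σ ∈ K) {q : ℝ}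
    (hq0 : 0 < q) (hq1 : q ≤ 1) : IsDeepIn K (q * s) (q • z + (1 - q) • σ) := by
  intro w hw hws
  have hzw : z + q⁻¹ • w ∈ K := by
    refine hz _ (Submodule.smul_mem _ _ hw) ?_
    rw [norm_smul, Real.norm_eq_abs, abs_inv, abs_of_pos hq0, inv_mul_le_iff₀ hq0]
    exact hws
  have hcomb : q • z + (1 - q) • σ + w = q • (z + q⁻¹ • w) + (1 - q) • σ := by
    rw [smul_add, smul_inv_smul₀ hq0.ne']
    abel
  rw [hcomb]
  exact hK hzw hσ hq0.le (by linarith) (by ring)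

end IsDeepIn

theorem Convex.exists_isDeepIn [FiniteDimensional ℝ X] (hK : Convex ℝ K) (hne : K.Nonempty) :
    ∃ c, ∃ r > 0, IsDeepIn K r c := by
  obtain ⟨_, hcI⟩ := hne.intrinsicInterior hK
  obtain ⟨c, hc, rfl⟩ := mem_intrinsicInterior.mp hcI
  obtain ⟨U, hU, hUK⟩ := (mem_nhds_subtype _ c _).mp (mem_interior_iff_mem_nhds.mp hc)
  obtain ⟨r, hr, hball⟩ := Metric.mem_nhds_iff.mp hU
  refine ⟨c, r / 2, by positivity, fun v hv hvr => ?_⟩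
  have hspan : (c : X) + v ∈ affineSpan ℝ K := by
    rw [← direction_affineSpan] at hv
    simpa [add_comm] using AffineSubspace.vadd_mem_of_mem_direction hv c.2
  refine hUK (show (⟨c + v, hspan⟩ : affineSpan ℝ K) ∈ Subtype.val ⁻¹' U from hball ?_)
  rw [mem_ball, dist_eq_norm, add_sub_cancel_left]
  linarith

theorem IsDeepIn.exists_forall_le_of_convexOn [FiniteDimensional ℝ X] {r : ℝ} {c : X}
    (hc : IsDeepIn K r c) (hr : 0 < r) {f : X → ℝ} (hf : ConvexOn ℝ K f) {C : ℝ} (hC : f c < C) :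
    ∃ r' > 0, ∀ w ∈ K, ‖w - c‖ ≤ r' → f w ≤ C := by
  set V := vectorSpan ℝ K
  have hg : ConvexOn ℝ {v : V | c + v ∈ K} (fun v : V => f (c + v)) :=
    (hf.translate_right c).comp_linearMap V.subtype
  have h0 : (0 : V) ∈ interior {v : V | c + v ∈ K} := by
    rw [mem_interior_iff_mem_nhds, Metric.mem_nhds_iff]
    exact ⟨r, hr, fun v hv => hc v v.2 (mem_ball_zero_iff.mp hv).le⟩
  have hlt : ∀ᶠ v : V in nhds 0, f (c + v) < C :=
    (hg.continuousOn_interior.continuousAt (isOpen_interior.mem_nhds h0)).eventually_lt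
      continuousAt_const (by simpa using hC)
  obtain ⟨r₁, hr₁, hball⟩ := Metric.eventually_nhds_iff.mp hlt
  refine ⟨r₁ / 2, by positivity, fun w hw hwc => ?_⟩
  have := hball (y := ⟨w - c, sub_mem_vectorSpan hw (hc.mem hr.le)⟩)
    (by rw [dist_zero_right]; exact hwc.trans_lt (by linarith))
  simpa using this.le

end DeepPoints

namespace IsConvexPseudometricOn

variable {X : Type*} [NormedAddCommGroup X] [NormedSpace ℝ X] {K : Set X} {D : X → X → ℝ}

theorem le_mul_norm_div (hD : IsConvexPseudometricOn K D) {s : ℝ} {z : X} (hz : IsDeepIn K s z)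
    (hs : 0 < s) {C : ℝ} (hC : ∀ w ∈ K, ‖w - z‖ ≤ s → D z w ≤ C) {x : X} (hx : x ∈ K) :
    D z x ≤ C * ‖x - z‖ / s := by
  rcases eq_or_ne x z with rfl | hxz
  · simp [hD.self_eq_zero]
  set t := ‖x - z‖
  have ht : 0 < t := norm_pos_iff.mpr (sub_ne_zero_of_ne hxz)
  set w := z + (s / t) • (z - x)
  have hwz : ‖w - z‖ = s := by
    rw [add_sub_cancel_left, norm_smul, norm_sub_rev, Real.norm_eq_abs, abs_of_pos (by positivity),
      div_mul_cancel₀ _ ht.ne']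
  have hw : w ∈ K :=
    hz _ (Submodule.smul_mem _ _ (sub_mem_vectorSpan (hz.mem hs.le) hx)) (by simpa [w] using hwz.le)
  -- `z` divides the segment from `w` to `x` in the ratio `s : t`
  have hzw : (t / (t + s)) • w + (1 - t / (t + s)) • x = z := by
    match_scalars
    · field_simp
    · field_simp
      ring
  have hconv := (hD.convexOn x hx).le_one_sub hw hx (p := t / (t + s)) (by positivity)
    (by rw [div_le_one (by positivity)]; linarith)
  simp only [hzw, hD.self_eq_zero, mul_zero, add_zero] at hconv
  have htri : D w x ≤ C + D z x :=
    (hD.triangle w z x).trans (by rw [hD.symm]; gcongr; exact hC w hw hwz.le)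
  rw [le_div_iff₀ hs]
  rw [div_mul_eq_mul_div, le_div_iff₀ (by positivity)] at hconv
  nlinarith

theorem exists_bound [FiniteDimensional ℝ X] (hD : IsConvexPseudometricOn K D)
    (hK : IsCompact K) (hKc : Convex ℝ K) (hne : K.Nonempty) :
    ∃ B, ∀ x ∈ K, ∀ y ∈ K, D x y ≤ B := by
  obtain ⟨c, r, hr, hcr⟩ := hKc.exists_isDeepIn hne
  have hc := hcr.mem hr.le
  obtain ⟨r', hr', hnear⟩ := hcr.exists_forall_le_of_convexOn hr (hD.convexOn c hc)
    (C := 1) (by simp [hD.self_eq_zero])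
  obtain ⟨R, hR⟩ := hK.isBounded.subset_closedBall c
  set s := min r r'
  have hs : 0 < s := lt_min hr hr'
  have hcx : ∀ x ∈ K, D c x ≤ R / s := fun x hx => calc
    D c x ≤ 1 * ‖x - c‖ / s :=
      hD.le_mul_norm_div (hcr.mono (min_le_left _ _)) hs
        (fun w hw hwc => hD.symm c w ▸ hnear w hw (hwc.trans (min_le_right _ _))) hx
    _ ≤ R / s := by
      rw [one_mul]
      gcongr
      simpa [dist_eq_norm] using hR hx
  exact ⟨2 * (R / s), fun x hx y hy => calc
    D x y ≤ D c x + D c y := hD.symm x c ▸ hD.triangle x c y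
    _ ≤ 2 * (R / s) := by linarith [hcx x hx, hcx y hy]⟩

/-- Translate the triangle `x₀, m, σ` by `x - x₀`, where `m` is the midpoint of `x₀` and `σ`:
convexity halves `D` along the segments `x₀σ` and `x(σ + x - x₀)`, whose midpoints are `m` and
its translate. -/
theorem le_add_add_of_translate (hD : IsConvexPseudometricOn K D) {x x₀ σ : X} (hx : x ∈ K)
    (hx₀ : x₀ ∈ K) (hσ : σ ∈ K) (hσv : σ + (x - x₀) ∈ K) :
    D x σ ≤ D x₀ σ + D σ (σ + (x - x₀)) +
      2 * D ((1 / 2 : ℝ) • (x₀ + σ)) ((1 / 2 : ℝ) • (x₀ + σ) + (x - x₀)) := by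
  set v := x - x₀
  set m := (1 / 2 : ℝ) • (x₀ + σ)
  have hm : D m σ ≤ 1 / 2 * D x₀ σ := by
    have h := (hD.convexOn σ hσ).le_one_sub hx₀ hσ (p := 1 / 2) (by norm_num) (by norm_num)
    rw [show (1 / 2 : ℝ) • x₀ + (1 - 1 / 2 : ℝ) • σ = m by module, hD.self_eq_zero] at h
    linarith
  have hmv : D (m + v) x ≤ 1 / 2 * D (σ + v) x := by
    have h := (hD.convexOn x hx).le_one_sub hσv hx (p := 1 / 2) (by norm_num) (by norm_num)
    rw [show (1 / 2 : ℝ) • (σ + v) + (1 - 1 / 2 : ℝ) • x = m + v by simp only [m, v]; module,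
      hD.self_eq_zero] at h
    linarith
  have h₁ := hD.triangle x (m + v) σ
  have h₂ := hD.triangle (m + v) m σ
  have h₃ : D (σ + v) x ≤ D σ (σ + v) + D x σ := by
    rw [hD.symm σ, hD.symm x]
    exact hD.triangle _ _ _
  rw [hD.symm x (m + v)] at h₁
  rw [hD.symm (m + v) m] at h₂
  linarith

theorem le_add_of_isDeepIn (hD : IsConvexPseudometricOn K D) (hKc : Convex ℝ K) {B : ℝ}
    (hB : ∀ x ∈ K, ∀ y ∈ K, D x y ≤ B) {s : ℝ} {σ : X} (hσ : IsDeepIn K s σ) (hs : 0 < s)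
    {x x₀ : X} (hx : x ∈ K) (hx₀ : x₀ ∈ K) (hxx₀ : ‖x - x₀‖ ≤ s / 2) :
    D x σ ≤ D x₀ σ + 5 * B * ‖x - x₀‖ / s := by
  have hσK := hσ.mem hs.le
  have hv := sub_mem_vectorSpan hx hx₀
  have hm : IsDeepIn K (s / 2) ((1 / 2 : ℝ) • (x₀ + σ)) := by
    have h := hσ.convexCombination hKc hx₀ (q := 1 / 2) (by norm_num) (by norm_num)
    rwa [show (1 / 2 : ℝ) • σ + (1 - 1 / 2 : ℝ) • x₀ = (1 / 2 : ℝ) • (x₀ + σ) by module,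
      one_div_mul_eq_div] at h
  have hσv := hD.le_mul_norm_div hσ hs (fun w hw _ => hB σ hσK w hw)
    (hσ (x - x₀) hv (hxx₀.trans (by linarith)))
  have hmv := hD.le_mul_norm_div hm (by positivity)
    (fun w hw _ => hB _ (hm.mem (by positivity)) w hw) (hm (x - x₀) hv hxx₀)
  simp only [add_sub_cancel_left] at hσv hmv
  have key := hD.le_add_add_of_translate hx hx₀ hσK (hσ (x - x₀) hv (hxx₀.trans (by linarith)))
  have h2 : B * ‖x - x₀‖ / (s / 2) = 2 * (B * ‖x - x₀‖ / s) := by field_simp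
  have h5 : 5 * B * ‖x - x₀‖ / s = 5 * (B * ‖x - x₀‖ / s) := by ring
  linarith

end IsConvexPseudometricOn

section BallInf

variable {X : Type*} {K : Set X} {D : X → X → ℝ} {E : X → ℝ}

noncomputable def ballInf (K : Set X) (D : X → X → ℝ) (E : X → ℝ) (ε : ℝ) (ρ : X) : ℝ :=
  sInf (E '' {σ ∈ K | D ρ σ ≤ ε})

theorem ballInf_le (hE0 : ∀ σ ∈ K, 0 ≤ E σ) {ρ σ : X} {ε : ℝ} (hσ : σ ∈ K) (hσε : D ρ σ ≤ ε) :
    ballInf K D E ε ρ ≤ E σ :=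
  csInf_le ⟨0, by rintro _ ⟨τ, ⟨hτ, -⟩, rfl⟩; exact hE0 τ hτ⟩ ⟨σ, ⟨hσ, hσε⟩, rfl⟩

theorem le_ballInf {ρ : X} {ε a : ℝ} (hρ : ρ ∈ K) (hρε : D ρ ρ ≤ ε)
    (h : ∀ σ ∈ K, D ρ σ ≤ ε → a ≤ E σ) : a ≤ ballInf K D E ε ρ :=
  le_csInf ⟨E ρ, ρ, ⟨hρ, hρε⟩, rfl⟩ (by rintro _ ⟨σ, ⟨hσ, hσε⟩, rfl⟩; exact h σ hσ hσε)

theorem antitoneOn_ballInf (hE0 : ∀ σ ∈ K, 0 ≤ E σ) {ρ : X} (hρ : ρ ∈ K) (hρρ : D ρ ρ = 0) :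
    AntitoneOn (ballInf K D E · ρ) (Ici 0) :=
  fun _ ha _ _ hab => le_ballInf hρ (hρρ ▸ ha) fun _ hσ hσb => ballInf_le hE0 hσ (hσb.trans hab)

variable [NormedAddCommGroup X] [NormedSpace ℝ X] {M : ℝ}

theorem ballInf_sub_le (hD : IsConvexPseudometricOn K D) (hE : ConvexOn ℝ K E)
    (hE0 : ∀ σ ∈ K, 0 ≤ E σ) (hEM : ∀ σ ∈ K, E σ ≤ M) {ρ : X} (hρ : ρ ∈ K) {ε η : ℝ}
    (hη : 0 ≤ η) (hηε : η ≤ ε) :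
    ballInf K D E (ε - η) ρ ≤ ballInf K D E ε ρ + η / ε * M := by
  rcases hη.eq_or_lt with rfl | hη
  · simp
  have hε : 0 < ε := hη.trans_le hηε
  set p := η / ε
  have hp0 : 0 ≤ p := by positivity
  have hp1 : p ≤ 1 := div_le_one_of_le₀ hηε hε.le
  suffices ballInf K D E (ε - η) ρ - p * M ≤ ballInf K D E ε ρ by linarith
  refine le_ballInf hρ (by rw [hD.self_eq_zero]; linarith) fun σ hσ hσε => ?_
  -- shrink the ball by pulling `σ` towards its centre `ρ`
  set σ' := p • ρ + (1 - p) • σ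
  have hσ' : σ' ∈ K := hE.1 hρ hσ hp0 (by linarith) (by ring)
  have hDσ' : D ρ σ' ≤ ε - η := calc
    D ρ σ' = D σ' ρ := hD.symm _ _
    _ ≤ p * D ρ ρ + (1 - p) * D σ ρ := (hD.convexOn ρ hρ).le_one_sub hρ hσ hp0 hp1
    _ = (1 - p) * D ρ σ := by rw [hD.self_eq_zero, hD.symm]; ring
    _ ≤ (1 - p) * ε := by gcongr
    _ = ε - η := by simp only [p]; field_simp
  have hEσ' : E σ' ≤ p * M + E σ := calc
    E σ' ≤ p * E ρ + (1 - p) * E σ := hE.le_one_sub hρ hσ hp0 hp1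
    _ ≤ p * M + E σ := by nlinarith [hEM ρ hρ, hE0 σ hσ]
  linarith [ballInf_le hE0 hσ' hDσ']

variable {B : ℝ} {c : X} {r : ℝ}

theorem ballInf_add_le (hD : IsConvexPseudometricOn K D) (hE : ConvexOn ℝ K E)
    (hE0 : ∀ σ ∈ K, 0 ≤ E σ) (hEM : ∀ σ ∈ K, E σ ≤ M) (hB : ∀ x ∈ K, ∀ y ∈ K, D x y ≤ B)
    (hc : IsDeepIn K r c) (hr : 0 < r) {q : ℝ} (hq0 : 0 < q) (hq1 : q ≤ 1) {x y : X}
    (hx : x ∈ K) (hy : y ∈ K) (hxy : ‖x - y‖ ≤ q ^ 2 * r / 5) {ε : ℝ} (hε : 0 ≤ ε) :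
    ballInf K D E (ε + 2 * B * q) x ≤ ballInf K D E ε y + q * M := by
  have hcK := hc.mem hr.le
  have hB0 : 0 ≤ B := hD.self_eq_zero c ▸ hB c hcK c hcK
  suffices ballInf K D E (ε + 2 * B * q) x - q * M ≤ ballInf K D E ε y by linarith
  refine le_ballInf hy (by rw [hD.self_eq_zero]; exact hε) fun σ hσ hσε => ?_
  -- pull `σ` towards the deep point `c`, where `D` is Lipschitz in its first argument
  set σq := q • c + (1 - q) • σ
  have hdeep : IsDeepIn K (q * r) σq := hc.convexCombination hE.1 hσ hq0 hq1
  have hlip : D x σq ≤ D y σq + B * q := calc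
    D x σq ≤ D y σq + 5 * B * ‖x - y‖ / (q * r) :=
      hD.le_add_of_isDeepIn hE.1 hB hdeep (by positivity) hx hy
        (hxy.trans (by nlinarith [mul_nonneg (mul_nonneg hq0.le hr.le) (sub_nonneg.2 hq1)]))
    _ ≤ D y σq + B * q := by
      gcongr
      rw [div_le_iff₀ (by positivity)]
      nlinarith
  have hyσq : D y σq ≤ q * B + ε := calc
    D y σq = D σq y := hD.symm _ _
    _ ≤ q * D c y + (1 - q) * D σ y := (hD.convexOn y hy).le_one_sub hcK hσ hq0.le hq1
    _ ≤ q * B + (1 - q) * ε := by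
      gcongr
      · exact hB c hcK y hy
      · exact hD.symm σ y ▸ hσε
    _ ≤ q * B + ε := by nlinarith
  have hEσq : E σq ≤ E σ + q * M := calc
    E σq ≤ q * E c + (1 - q) * E σ := hE.le_one_sub hcK hσ hq0.le hq1
    _ ≤ E σ + q * M := by nlinarith [hEM c hcK, hE0 σ hσ]
  linarith [ballInf_le hE0 (hdeep.mem (by positivity)) (show D x σq ≤ ε + 2 * B * q by linarith)]

theorem exists_ballInf_add_le (hD : IsConvexPseudometricOn K D) (hE : ConvexOn ℝ K E)
    (hE0 : ∀ σ ∈ K, 0 ≤ E σ) (hEM : ∀ σ ∈ K, E σ ≤ M) (hB : ∀ x ∈ K, ∀ y ∈ K, D x y ≤ B)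
    (hc : IsDeepIn K r c) (hr : 0 < r) :
    ∀ θ > 0, ∃ δ > 0, ∀ x ∈ K, ∀ y ∈ K, dist x y < δ →
      ∀ ε ≥ 0, ballInf K D E (ε + θ) x ≤ ballInf K D E ε y + θ := by
  intro θ hθ
  have hcK := hc.mem hr.le
  have hB0 : 0 ≤ B := hD.self_eq_zero c ▸ hB c hcK c hcK
  have hM0 : 0 ≤ M := (hE0 c hcK).trans (hEM c hcK)
  set q := min 1 (θ / (2 * B + M + 1))
  have hq0 : 0 < q := by positivity
  have hq1 : q ≤ 1 := min_le_left _ _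
  have hqθ : q * (2 * B + M + 1) ≤ θ := by
    rw [← le_div_iff₀ (by positivity)]
    exact min_le_right _ _
  refine ⟨q ^ 2 * r / 5, by positivity, fun x hx y hy hxy ε hε => ?_⟩
  calc ballInf K D E (ε + θ) x ≤ ballInf K D E (ε + 2 * B * q) x :=
        antitoneOn_ballInf hE0 hx (hD.self_eq_zero x) (by simp only [mem_Ici]; positivity)
          (by simp only [mem_Ici]; positivity) (by nlinarith)
    _ ≤ ballInf K D E ε y + q * M :=
        ballInf_add_le hD hE hE0 hEM hB hc hr hq0 hq1 hx hy (dist_eq_norm x y ▸ hxy.le) hε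
    _ ≤ ballInf K D E ε y + θ := by nlinarith

end BallInf

theorem stmt6_general {n : ℕ}
    (K : Set (EuclideanSpace ℝ (Fin n))) (hKne : K.Nonempty)
    (hK : IsCompact K) (hKc : Convex ℝ K)
    (D : EuclideanSpace ℝ (Fin n) → EuclideanSpace ℝ (Fin n) → ℝ)
    (hD0 : ∀ ρ σ, D ρ σ = 0 ↔ ρ = σ)
    (hDsymm : ∀ ρ σ, D ρ σ = D σ ρ)
    (hDtri : ∀ ρ σ τ, D ρ τ ≤ D ρ σ + D σ τ)
    (hDconv : ∀ σ₁ ∈ K, ∀ σ₂ ∈ K, ∀ ρ ∈ K, ∀ p : ℝ, 0 ≤ p → p ≤ 1 →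
      D (p • σ₁ + (1 - p) • σ₂) ρ ≤ p * D σ₁ ρ + (1 - p) * D σ₂ ρ)
    (E : EuclideanSpace ℝ (Fin n) → ℝ) (hEnn : ∀ σ ∈ K, 0 ≤ E σ)
    (M : ℝ) (hM : ∀ σ ∈ K, E σ ≤ M)
    (hEconv : ∀ σ₁ ∈ K, ∀ σ₂ ∈ K, ∀ p : ℝ, 0 ≤ p → p ≤ 1 →
      E (p • σ₁ + (1 - p) • σ₂) ≤ p * E σ₁ + (1 - p) * E σ₂) :
    ContinuousOn
      (fun q : ℝ × EuclideanSpace ℝ (Fin n) => sInf (E '' {σ ∈ K | D q.2 σ ≤ q.1}))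
      (Set.Ioi (0:ℝ) ×ˢ K) := by
  have hD : IsConvexPseudometricOn K D :=
    ⟨fun x => (hD0 x x).2 rfl, hDsymm, hDtri, fun ρ hρ =>
      .of_forall_one_sub hKc fun σ₁ h₁ σ₂ h₂ => hDconv σ₁ h₁ σ₂ h₂ ρ hρ⟩
  have hE : ConvexOn ℝ K E := .of_forall_one_sub hKc hEconv
  obtain ⟨c, r, hr, hc⟩ := hKc.exists_isDeepIn hKne
  obtain ⟨B, hB⟩ := hD.exists_bound hK hKc hKne
  have hM0 : 0 ≤ M := (hEnn c (hc.mem hr.le)).trans (hM c (hc.mem hr.le))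
  exact continuousOn_of_antitoneOn_of_transport hM0
    (fun ρ hρ => antitoneOn_ballInf hEnn hρ (hD.self_eq_zero ρ))
    (fun ρ hρ _ _ => ballInf_sub_le hD hE hEnn hM hρ)
    (exists_ballInf_add_le hD hE hEnn hM hB hc hr)

/-- Abstract continuity theorem: on a compact convex `K ⊆ ℝⁿ` with a convex metric `D`,
any convex bounded nonnegative functional `E` gives rise to
`(ε,ρ) ↦ E_ε(ρ) = inf{E(σ) : σ ∈ K, D(ρ,σ) ≤ ε}` jointly continuous on `(0,∞) × K`. -/
theorem stmt6 {n : ℕ}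
    (K : Set (EuclideanSpace ℝ (Fin n))) (hKne : K.Nonempty)
    (hK : IsCompact K) (hKc : Convex ℝ K)
    (D : EuclideanSpace ℝ (Fin n) → EuclideanSpace ℝ (Fin n) → ℝ)
    (hDnn : ∀ ρ σ, 0 ≤ D ρ σ) (hD0 : ∀ ρ σ, D ρ σ = 0 ↔ ρ = σ)
    (hDsymm : ∀ ρ σ, D ρ σ = D σ ρ)
    (hDtri : ∀ ρ σ τ, D ρ τ ≤ D ρ σ + D σ τ)
    (hDconv : ∀ σ₁ ∈ K, ∀ σ₂ ∈ K, ∀ ρ ∈ K, ∀ p : ℝ, 0 ≤ p → p ≤ 1 →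
      D (p • σ₁ + (1 - p) • σ₂) ρ ≤ p * D σ₁ ρ + (1 - p) * D σ₂ ρ)
    (E : EuclideanSpace ℝ (Fin n) → ℝ) (hEnn : ∀ σ ∈ K, 0 ≤ E σ)
    (M : ℝ) (hM : ∀ σ ∈ K, E σ ≤ M)
    (hEconv : ∀ σ₁ ∈ K, ∀ σ₂ ∈ K, ∀ p : ℝ, 0 ≤ p → p ≤ 1 →
      E (p • σ₁ + (1 - p) • σ₂) ≤ p * E σ₁ + (1 - p) * E σ₂) :
    ContinuousOn
      (fun q : ℝ × EuclideanSpace ℝ (Fin n) => sInf (E '' {σ ∈ K | D q.2 σ ≤ q.1}))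
      (Set.Ioi (0:ℝ) ×ˢ K) :=
  stmt6_general K hKne hK hKc D hD0 hDsymm hDtri hDconv E hEnn M hM hEconv
end

section
/- Exact decrease of distance-based measure under mixing with the closest separable state: let D be a convex, contractive distance satisfying the triangle inequality, ρ a state, and σ* a separable state achieving E_D(ρ) = D(ρ,σ*) where E_D(τ) = inf{D(τ,σ) : σ separable}. Then for every p ∈ [0,1], E_D((1−p)ρ + pσ*) = (1−p)·E_D(ρ). -/
/-- Exact decrease of the distance-based measure under mixing with the closest separable
state: if `σ*` achieves `E_D(ρ) = D(ρ,σ*)`, then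
`E_D((1−p)ρ + pσ*) = (1−p)·E_D(ρ)` for every `p ∈ [0,1]`. -/
theorem stmt11 {V : Type*} [AddCommGroup V] [Module ℝ V]
    (K Sep : Set V) (hSK : Sep ⊆ K) (hKconv : Convex ℝ K) (hSconv : Convex ℝ Sep)
    (hSne : Sep.Nonempty)
    (D : V → V → ℝ) (hDnn : ∀ ρ σ, 0 ≤ D ρ σ) (hD0 : ∀ ρ σ, D ρ σ = 0 ↔ ρ = σ)
    (hDsymm : ∀ ρ σ, D ρ σ = D σ ρ)
    (hDtri : ∀ ρ σ τ, D ρ τ ≤ D ρ σ + D σ τ)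
    (hDconv₁ : ∀ ρ₁ ρ₂ σ : V, ∀ p : ℝ, 0 ≤ p → p ≤ 1 →
      D (p • ρ₁ + (1 - p) • ρ₂) σ ≤ p * D ρ₁ σ + (1 - p) * D ρ₂ σ)
    (hDconv₂ : ∀ ρ σ₁ σ₂ : V, ∀ p : ℝ, 0 ≤ p → p ≤ 1 →
      D ρ (p • σ₁ + (1 - p) • σ₂) ≤ p * D ρ σ₁ + (1 - p) * D ρ σ₂)
    (ρ : V) (hρ : ρ ∈ K) (σstar : V) (hσstar : σstar ∈ Sep)
    (hopt : IsLeast ((D ρ) '' Sep) (D ρ σstar))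
    (p : ℝ) (hp0 : 0 ≤ p) (hp1 : p ≤ 1) :
    sInf ((D ((1 - p) • ρ + p • σstar)) '' Sep) = (1 - p) * D ρ σstar := by
  set ρ' := (1 - p) • ρ + p • σstar with hρ'
  have h1p0 : (0:ℝ) ≤ 1 - p := by linarith
  have h1p1 : (1:ℝ) - p ≤ 1 := by linarith
  -- upper bound: D ρ' σstar ≤ (1-p) * D ρ σstar
  have hub : D ρ' σstar ≤ (1 - p) * D ρ σstar := by
    have := hDconv₁ ρ σstar σstar (1 - p) h1p0 h1p1
    have h0 : D σstar σstar = 0 := (hD0 σstar σstar).mpr rfl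
    simp only [sub_sub_cancel] at this
    calc D ρ' σstar ≤ (1 - p) * D ρ σstar + p * D σstar σstar := this
      _ = (1 - p) * D ρ σstar := by rw [h0]; ring
  -- lower bound: ∀ σ ∈ Sep, (1-p)*D ρ σstar ≤ D ρ' σ
  have hlb : ∀ σ ∈ Sep, (1 - p) * D ρ σstar ≤ D ρ' σ := by
    intro σ hσ
    have hDρρ' : D ρ ρ' ≤ p * D ρ σstar := by
      have := hDconv₂ ρ ρ σstar (1 - p) h1p0 h1p1
      have h0 : D ρ ρ = 0 := (hD0 ρ ρ).mpr rfl
      simp only [sub_sub_cancel] at this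
      calc D ρ ρ' ≤ (1 - p) * D ρ ρ + p * D ρ σstar := this
        _ = p * D ρ σstar := by rw [h0]; ring
    have htri := hDtri ρ ρ' σ
    have hmin : D ρ σstar ≤ D ρ σ := hopt.2 ⟨σ, hσ, rfl⟩
    nlinarith
  apply le_antisymm
  · exact le_trans (csInf_le ⟨(1 - p) * D ρ σstar, fun x ⟨σ, hσ, hx⟩ => hx ▸ hlb σ hσ⟩
      ⟨σstar, hσstar, rfl⟩) hub
  · exact le_csInf ⟨_, ⟨σstar, hσstar, rfl⟩⟩ fun x ⟨σ, hσ, hx⟩ => hx ▸ hlb σ hσ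
end

section
/- Upper bound on the ε-measure: let E be a convex functional non-increasing under mixing with separable states, D a convex distance, and E_D(ρ) = min over separable σ of D(ρ,σ) > ε. Then E_ε^{(D)}(ρ) ≤ (1 − ε/E_D(ρ))·E(ρ). -/
/-- Upper bound on the ε-measure: if `E` is convex and non-increasing under mixing with
separable states, `D` is a convex distance, and `E_D(ρ) > ε`, then
`E_ε(ρ) ≤ (1 − ε/E_D(ρ))·E(ρ)`. -/
theorem stmt13 {V : Type*} [AddCommGroup V] [Module ℝ V]
    (K Sep : Set V) (hSK : Sep ⊆ K) (hKconv : Convex ℝ K) (hSconv : Convex ℝ Sep)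
    (hSne : Sep.Nonempty)
    (D : V → V → ℝ) (hDnn : ∀ ρ σ, 0 ≤ D ρ σ) (hD0 : ∀ ρ, D ρ ρ = 0)
    (hDsymm : ∀ ρ σ, D ρ σ = D σ ρ)
    (hDtri : ∀ ρ σ τ, D ρ τ ≤ D ρ σ + D σ τ)
    (hDconv₂ : ∀ ρ σ₁ σ₂ : V, ∀ p : ℝ, 0 ≤ p → p ≤ 1 →
      D ρ (p • σ₁ + (1 - p) • σ₂) ≤ p * D ρ σ₁ + (1 - p) * D ρ σ₂)
    (E : V → ℝ) (hEnn : ∀ σ ∈ K, 0 ≤ E σ)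
    (hEconv : ∀ σ₁ ∈ K, ∀ σ₂ ∈ K, ∀ p : ℝ, 0 ≤ p → p ≤ 1 →
      E (p • σ₁ + (1 - p) • σ₂) ≤ p * E σ₁ + (1 - p) * E σ₂)
    (hEmix : ∀ ρ ∈ K, ∀ σ ∈ Sep, ∀ p : ℝ, 0 ≤ p → p ≤ 1 →
      E ((1 - p) • ρ + p • σ) ≤ (1 - p) * E ρ)
    (ρ : V) (hρ : ρ ∈ K) (ε : ℝ) (hε0 : 0 ≤ ε)
    (ED : ℝ) (hED : IsLeast ((D ρ) '' Sep) ED) (hε : ε < ED) :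
    sInf (E '' {τ ∈ K | D ρ τ ≤ ε}) ≤ (1 - ε / ED) * E ρ := by
  obtain ⟨⟨σ, hσSep, hσD⟩, -⟩ := hED
  have hED0 : 0 < ED := lt_of_le_of_lt hε0 hε
  set p : ℝ := ε / ED with hp
  have hp0 : 0 ≤ p := div_nonneg hε0 hED0.le
  have hp1 : p ≤ 1 := by
    rw [div_le_one hED0]; exact hε.le
  set τ : V := (1 - p) • ρ + p • σ with hτ
  have hτK : τ ∈ K := by
    have := hKconv hρ (hSK hσSep) (by linarith : (0:ℝ) ≤ 1 - p) hp0 (by ring)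
    simpa using this
  have hDτ : D ρ τ ≤ ε := by
    have h := hDconv₂ ρ σ ρ p hp0 hp1
    rw [hD0] at h
    calc D ρ τ = D ρ (p • σ + (1 - p) • ρ) := by rw [hτ, add_comm]
      _ ≤ p * D ρ σ + (1 - p) * 0 := h
      _ = p * ED := by rw [hσD]; ring
      _ = ε := by rw [hp]; field_simp
  have hEτ : E τ ≤ (1 - p) * E ρ := hEmix ρ hρ σ hσSep p hp0 hp1
  have hmem : E τ ∈ E '' {τ ∈ K | D ρ τ ≤ ε} := ⟨τ, ⟨hτK, hDτ⟩, rfl⟩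
  have hbdd : BddBelow (E '' {τ ∈ K | D ρ τ ≤ ε}) := by
    refine ⟨0, ?_⟩
    rintro x ⟨y, ⟨hyK, -⟩, rfl⟩
    exact hEnn y hyK
  calc sInf (E '' {τ ∈ K | D ρ τ ≤ ε}) ≤ E τ := csInf_le hbdd hmem
    _ ≤ (1 - p) * E ρ := hEτ
    _ = (1 - ε / ED) * E ρ := by rw [hp]
end

section
/- Lower bound on the ε-measure: under the hypotheses that E is a convex LOCC monotone, D is a convex contractive distance satisfying the triangle inequality, and ε ≤ E_D(ρ), one has E_ε^{(D)}(ρ) ≥ min{E(τ) : E_D(τ) = E_D(ρ) − ε}. -/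
/-!
Let `ρ̃` attain `E_ε(ρ)` and let `σ̃` be a closest separable state to `ρ̃`, at distance `a`.
Mixing `ρ̃` towards `σ̃` with weight `s` keeps `σ̃` a closest separable state and scales the
distance to `(1 - s) a`; since `E_D(ρ) - ε ≤ a` by the triangle inequality, some `s` lands
exactly on `E_D(ρ) - ε`, and mixing with a separable state does not increase `E`.
-/

section MixingDistance

variable {V : Type*} [AddCommGroup V] [Module ℝ V] {D : V → V → ℝ}

theorem dist_mix_left_le (hD0 : ∀ x, D x x = 0)
    (hDconv₂ : ∀ ρ σ₁ σ₂ : V, ∀ p : ℝ, 0 ≤ p → p ≤ 1 →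
      D ρ (p • σ₁ + (1 - p) • σ₂) ≤ p * D ρ σ₁ + (1 - p) * D ρ σ₂)
    (ρ σ : V) {s : ℝ} (hs0 : 0 ≤ s) (hs1 : s ≤ 1) :
    D ρ ((1 - s) • ρ + s • σ) ≤ s * D ρ σ := by
  have h := hDconv₂ ρ ρ σ (1 - s) (by linarith) (by linarith)
  rw [sub_sub_cancel, hD0, mul_zero, zero_add] at h
  exact h

theorem dist_mix_right_le (hD0 : ∀ x, D x x = 0)
    (hDconv₁ : ∀ ρ₁ ρ₂ σ : V, ∀ p : ℝ, 0 ≤ p → p ≤ 1 →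
      D (p • ρ₁ + (1 - p) • ρ₂) σ ≤ p * D ρ₁ σ + (1 - p) * D ρ₂ σ)
    (ρ σ : V) {s : ℝ} (hs0 : 0 ≤ s) (hs1 : s ≤ 1) :
    D ((1 - s) • ρ + s • σ) σ ≤ (1 - s) * D ρ σ := by
  have h := hDconv₁ ρ σ σ (1 - s) (by linarith) (by linarith)
  rw [sub_sub_cancel, hD0, mul_zero, add_zero] at h
  exact h

theorem isLeast_image_dist_mix (hD0 : ∀ x, D x x = 0)
    (hDtri : ∀ ρ σ τ, D ρ τ ≤ D ρ σ + D σ τ)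
    (hDconv₁ : ∀ ρ₁ ρ₂ σ : V, ∀ p : ℝ, 0 ≤ p → p ≤ 1 →
      D (p • ρ₁ + (1 - p) • ρ₂) σ ≤ p * D ρ₁ σ + (1 - p) * D ρ₂ σ)
    (hDconv₂ : ∀ ρ σ₁ σ₂ : V, ∀ p : ℝ, 0 ≤ p → p ≤ 1 →
      D ρ (p • σ₁ + (1 - p) • σ₂) ≤ p * D ρ σ₁ + (1 - p) * D ρ σ₂)
    {S : Set V} {ρ σ : V} (hσ : σ ∈ S) (hmin : IsLeast (D ρ '' S) (D ρ σ))
    {s : ℝ} (hs0 : 0 ≤ s) (hs1 : s ≤ 1) :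
    IsLeast (D ((1 - s) • ρ + s • σ) '' S) ((1 - s) * D ρ σ) := by
  set τ := (1 - s) • ρ + s • σ
  have hρτ : D ρ τ ≤ s * D ρ σ := dist_mix_left_le hD0 hDconv₂ ρ σ hs0 hs1
  have hlower : ∀ σ' ∈ S, (1 - s) * D ρ σ ≤ D τ σ' := fun σ' hσ' => by
    have := hmin.2 ⟨σ', hσ', rfl⟩
    linarith [hDtri ρ τ σ']
  refine ⟨⟨σ, hσ, ?_⟩, ?_⟩
  · exact le_antisymm (dist_mix_right_le hD0 hDconv₁ ρ σ hs0 hs1) (hlower σ hσ)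
  · rintro _ ⟨σ', hσ', rfl⟩
    exact hlower σ' hσ'

end MixingDistance

theorem exists_one_sub_mul_eq {a b : ℝ} (hb : 0 ≤ b) (hba : b ≤ a) :
    ∃ s : ℝ, 0 ≤ s ∧ s ≤ 1 ∧ (1 - s) * a = b := by
  rcases hba.eq_or_lt' with rfl | hlt
  · exact ⟨0, le_rfl, zero_le_one, by ring⟩
  · have ha : 0 < a := hb.trans_lt hlt
    refine ⟨1 - b / a, ?_, ?_, ?_⟩
    · linarith [(div_le_one ha).2 hba]
    · linarith [div_nonneg hb ha.le]
    · field_simp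
      ring

theorem stmt14_general {V : Type*} [AddCommGroup V] [Module ℝ V]
    (K Sep : Set V) (hSK : Sep ⊆ K) (hKconv : Convex ℝ K)
    (D : V → V → ℝ) (hDnn : ∀ ρ σ, 0 ≤ D ρ σ) (hD0 : ∀ ρ σ, D ρ σ = 0 ↔ ρ = σ)
    (hDtri : ∀ ρ σ τ, D ρ τ ≤ D ρ σ + D σ τ)
    (hDconv₁ : ∀ ρ₁ ρ₂ σ : V, ∀ p : ℝ, 0 ≤ p → p ≤ 1 →
      D (p • ρ₁ + (1 - p) • ρ₂) σ ≤ p * D ρ₁ σ + (1 - p) * D ρ₂ σ)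
    (hDconv₂ : ∀ ρ σ₁ σ₂ : V, ∀ p : ℝ, 0 ≤ p → p ≤ 1 →
      D ρ (p • σ₁ + (1 - p) • σ₂) ≤ p * D ρ σ₁ + (1 - p) * D ρ σ₂)
    (E : V → ℝ) (hEnn : ∀ σ ∈ K, 0 ≤ E σ)
    (hEmix : ∀ τ ∈ K, ∀ σ ∈ Sep, ∀ s : ℝ, 0 ≤ s → s ≤ 1 →
      E ((1 - s) • τ + s • σ) ≤ E τ)
    (hSepOpt : ∀ τ ∈ K, ∃ σ ∈ Sep, IsLeast ((D τ) '' Sep) (D τ σ))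
    (ρ : V) (ε : ℝ) (hε : ε ≤ sInf ((D ρ) '' Sep))
    (ρt : V) (hρt : ρt ∈ K)
    (hopt : IsLeast (E '' {τ ∈ K | D ρ τ ≤ ε}) (E ρt)) (hball : D ρ ρt ≤ ε) :
    sInf (E '' {τ ∈ K | sInf ((D τ) '' Sep) = sInf ((D ρ) '' Sep) - ε}) ≤
      sInf (E '' {τ ∈ K | D ρ τ ≤ ε}) := by
  have hDself : ∀ x, D x x = 0 := fun x => (hD0 x x).2 rfl
  obtain ⟨σt, hσt, hmin⟩ := hSepOpt ρt hρt
  have hEDρ : sInf (D ρ '' Sep) ≤ D ρ ρt + D ρt σt :=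
    (csInf_le ⟨0, by rintro _ ⟨σ, -, rfl⟩; exact hDnn ρ σ⟩ (Set.mem_image_of_mem _ hσt)).trans
      (hDtri ρ ρt σt)
  obtain ⟨s, hs0, hs1, hsa⟩ := exists_one_sub_mul_eq (sub_nonneg.2 hε) (by linarith)
  have hτK : (1 - s) • ρt + s • σt ∈ K := hKconv hρt (hSK hσt) (by linarith) hs0 (by ring)
  have hEDτ : sInf (D ((1 - s) • ρt + s • σt) '' Sep) = sInf (D ρ '' Sep) - ε := by
    rw [(isLeast_image_dist_mix hDself hDtri hDconv₁ hDconv₂ hσt hmin hs0 hs1).csInf_eq, hsa]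
  rw [hopt.csInf_eq]
  refine (csInf_le ?_ (Set.mem_image_of_mem E (Set.mem_sep hτK hEDτ))).trans
    (hEmix ρt hρt σt hσt s hs0 hs1)
  exact ⟨0, by rintro _ ⟨τ, ⟨hτ, -⟩, rfl⟩; exact hEnn τ hτ⟩

/-- Lower bound on the ε-measure: if `E` is a convex LOCC monotone (in particular
non-increasing under mixing with separable states), `D` is a convex contractive distance
with the triangle inequality, and `ε ≤ E_D(ρ)`, then
`E_ε(ρ) ≥ min{E(τ) : E_D(τ) = E_D(ρ) − ε}`. -/
theorem stmt14 {V : Type*} [AddCommGroup V] [Module ℝ V]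
    (K Sep : Set V) (hSK : Sep ⊆ K) (hKconv : Convex ℝ K) (hSconv : Convex ℝ Sep)
    (hSne : Sep.Nonempty)
    (D : V → V → ℝ) (hDnn : ∀ ρ σ, 0 ≤ D ρ σ) (hD0 : ∀ ρ σ, D ρ σ = 0 ↔ ρ = σ)
    (hDsymm : ∀ ρ σ, D ρ σ = D σ ρ)
    (hDtri : ∀ ρ σ τ, D ρ τ ≤ D ρ σ + D σ τ)
    (hDconv₁ : ∀ ρ₁ ρ₂ σ : V, ∀ p : ℝ, 0 ≤ p → p ≤ 1 →
      D (p • ρ₁ + (1 - p) • ρ₂) σ ≤ p * D ρ₁ σ + (1 - p) * D ρ₂ σ)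
    (hDconv₂ : ∀ ρ σ₁ σ₂ : V, ∀ p : ℝ, 0 ≤ p → p ≤ 1 →
      D ρ (p • σ₁ + (1 - p) • σ₂) ≤ p * D ρ σ₁ + (1 - p) * D ρ σ₂)
    (E : V → ℝ) (hEnn : ∀ σ ∈ K, 0 ≤ E σ)
    (hEconv : ∀ σ₁ ∈ K, ∀ σ₂ ∈ K, ∀ p : ℝ, 0 ≤ p → p ≤ 1 →
      E (p • σ₁ + (1 - p) • σ₂) ≤ p * E σ₁ + (1 - p) * E σ₂)
    (hEmix : ∀ τ ∈ K, ∀ σ ∈ Sep, ∀ s : ℝ, 0 ≤ s → s ≤ 1 →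
      E ((1 - s) • τ + s • σ) ≤ E τ)
    (hSepOpt : ∀ τ ∈ K, ∃ σ ∈ Sep, IsLeast ((D τ) '' Sep) (D τ σ))
    (ρ : V) (hρ : ρ ∈ K) (ε : ℝ) (hε0 : 0 ≤ ε) (hε : ε ≤ sInf ((D ρ) '' Sep))
    (ρt : V) (hρt : ρt ∈ K)
    (hopt : IsLeast (E '' {τ ∈ K | D ρ τ ≤ ε}) (E ρt)) (hball : D ρ ρt ≤ ε) :
    sInf (E '' {τ ∈ K | sInf ((D τ) '' Sep) = sInf ((D ρ) '' Sep) - ε}) ≤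
      sInf (E '' {τ ∈ K | D ρ τ ≤ ε}) :=
  stmt14_general K Sep hSK hKconv D hDnn hD0 hDtri hDconv₁ hDconv₂ E hEnn hEmix hSepOpt ρ ε hε ρt
    hρt hopt hball
end

section
/- Self-consistency of distance-based ε-measures: for a convex contractive distance D satisfying the triangle inequality, the ε-version of the distance-based entanglement measure E_D, computed with the same distance D, satisfies (E_D)_ε^{(D)}(ρ) = max(E_D(ρ) − ε, 0) whenever ε ≤ E_D(ρ), i.e., (E_D)_ε^{(D)}(ρ) = E_D(ρ) − ε. -/
/-- Self-consistency of distance-based ε-measures: for a convex distance `D` with the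
triangle inequality, the ε-version of `E_D` computed with the same `D` satisfies
`(E_D)_ε(ρ) = E_D(ρ) − ε` whenever `0 ≤ ε ≤ E_D(ρ)`. -/
theorem stmt16 {V : Type*} [AddCommGroup V] [Module ℝ V]
    (K Sep : Set V) (hSK : Sep ⊆ K) (hKconv : Convex ℝ K) (hSconv : Convex ℝ Sep)
    (hSne : Sep.Nonempty)
    (D : V → V → ℝ) (hDnn : ∀ ρ σ, 0 ≤ D ρ σ) (hD0 : ∀ ρ σ, D ρ σ = 0 ↔ ρ = σ)
    (hDsymm : ∀ ρ σ, D ρ σ = D σ ρ)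
    (hDtri : ∀ ρ σ τ, D ρ τ ≤ D ρ σ + D σ τ)
    (hDconv₁ : ∀ ρ₁ ρ₂ σ : V, ∀ p : ℝ, 0 ≤ p → p ≤ 1 →
      D (p • ρ₁ + (1 - p) • ρ₂) σ ≤ p * D ρ₁ σ + (1 - p) * D ρ₂ σ)
    (hDconv₂ : ∀ ρ σ₁ σ₂ : V, ∀ p : ℝ, 0 ≤ p → p ≤ 1 →
      D ρ (p • σ₁ + (1 - p) • σ₂) ≤ p * D ρ σ₁ + (1 - p) * D ρ σ₂)
    (ρ : V) (hρ : ρ ∈ K) (σstar : V) (hσstar : σstar ∈ Sep)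
    (hopt : IsLeast ((D ρ) '' Sep) (D ρ σstar))
    (ε : ℝ) (hε0 : 0 ≤ ε) (hε : ε ≤ D ρ σstar) :
    sInf ((fun τ => sInf ((D τ) '' Sep)) '' {τ ∈ K | D ρ τ ≤ ε}) =
      D ρ σstar - ε := by
  set E := D ρ σstar with hE
  set T := ((fun τ => sInf ((D τ) '' Sep)) '' {τ ∈ K | D ρ τ ≤ ε}) with hT
  -- lower bound on all elements of T
  have lower : ∀ x ∈ T, E - ε ≤ x := by
    rintro x ⟨τ, ⟨hτK, hτε⟩, rfl⟩
    refine le_csInf (hSne.image _) ?_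
    rintro y ⟨σ, hσ, rfl⟩
    have h1 : E ≤ D ρ σ := hopt.2 ⟨σ, hσ, rfl⟩
    have h2 : D ρ σ ≤ D ρ τ + D τ σ := hDtri ρ τ σ
    linarith
  have hbdd : BddBelow T := ⟨E - ε, lower⟩
  -- upper bound: exhibit a witness
  have hEnn : 0 ≤ E := hDnn ρ σstar
  obtain ⟨τ0, hτ0mem, hτ0val⟩ :
      ∃ τ0, τ0 ∈ {τ ∈ K | D ρ τ ≤ ε} ∧ sInf ((D τ0) '' Sep) ≤ E - ε := by
    rcases eq_or_lt_of_le hEnn with hE0 | hEpos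
    · -- E = 0, hence ε = 0
      have hε0' : ε = 0 := le_antisymm (by linarith) hε0
      refine ⟨ρ, ⟨hρ, by rw [(hD0 ρ ρ).mpr rfl]; linarith⟩, ?_⟩
      have : sInf ((D ρ) '' Sep) = E := hopt.csInf_eq
      rw [this, hε0', ← hE0]; simp
    · set p := ε / E with hp
      have hp0 : 0 ≤ p := div_nonneg hε0 hEnn
      have hp1 : p ≤ 1 := (div_le_one hEpos).mpr hε
      have hpE : p * E = ε := div_mul_cancel₀ ε (ne_of_gt hEpos)
      refine ⟨p • σstar + (1 - p) • ρ, ⟨?_, ?_⟩, ?_⟩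
      · exact hKconv (hSK hσstar) hρ hp0 (by linarith) (by ring)
      · have := hDconv₂ ρ σstar ρ p hp0 hp1
        rw [(hD0 ρ ρ).mpr rfl] at this
        calc D ρ (p • σstar + (1 - p) • ρ) ≤ p * D ρ σstar + (1 - p) * 0 := this
          _ = ε := by rw [← hE, ← hpE]; ring
      · have h1 : D (p • σstar + (1 - p) • ρ) σstar ≤
            p * D σstar σstar + (1 - p) * D ρ σstar := hDconv₁ σstar ρ σstar p hp0 hp1
        rw [(hD0 σstar σstar).mpr rfl] at h1
        have h2 : sInf ((D (p • σstar + (1 - p) • ρ)) '' Sep) ≤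
            D (p • σstar + (1 - p) • ρ) σstar :=
          csInf_le ⟨0, by rintro y ⟨σ, hσ, rfl⟩; exact hDnn _ _⟩ ⟨σstar, hσstar, rfl⟩
        calc sInf ((D (p • σstar + (1 - p) • ρ)) '' Sep)
            ≤ p * 0 + (1 - p) * E := le_trans h2 h1
          _ = E - ε := by rw [← hpE]; ring
  have hTne : T.Nonempty := ⟨_, ⟨τ0, hτ0mem, rfl⟩⟩
  refine le_antisymm ?_ (le_csInf hTne lower)
  exact le_trans (csInf_le hbdd ⟨τ0, hτ0mem, rfl⟩) hτ0val
end

section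
/- Failure of monotonicity on average: there exists a state ρ = η|0⟩⟨0|⊗ρ_Ent + (1−η)|1⟩⟨1|⊗ρ_Sep with η ≤ ε/D_tr(ρ_Ent, ρ_Sep) such that E_ε(ρ) = 0 (since the separable state |1⟩⟨1|⊗ρ_Sep is within trace distance ε of ρ), while the local projective measurement on the ancilla yields outcomes ρ_Ent with probability η and ρ_Sep with probability 1−η, giving average ε-entanglement η·E_ε(ρ_Ent) > 0. Hence Σᵢ pᵢ E_ε(ρᵢ) > E_ε(ρ). -/
open Kronecker ComplexOrder

/-- The trace norm `tr|A| = tr √(AᴴA)` of a complex matrix. -/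
noncomputable def traceNorm {n : Type*} [Fintype n] [DecidableEq n]
    (A : Matrix n n ℂ) : ℝ :=
  (((Matrix.posSemidef_conjTranspose_mul_self A).1.eigenvectorUnitary : Matrix n n ℂ) *
      Matrix.diagonal (((↑) : ℝ → ℂ) ∘ Real.sqrt ∘ (Matrix.posSemidef_conjTranspose_mul_self A).1.eigenvalues) *
      (star (Matrix.posSemidef_conjTranspose_mul_self A).1.eigenvectorUnitary : Matrix n n ℂ)).trace.re

/-- The trace distance `D_tr(ρ,σ) = ½ tr|ρ − σ|`. -/
noncomputable def traceDist {n : Type*} [Fintype n] [DecidableEq n]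
    (ρ σ : Matrix n n ℂ) : ℝ :=
  traceNorm (ρ - σ) / 2

/-! The two blocks `|0⟩⟨0| ⊗ ρ_Ent` and `|1⟩⟨1| ⊗ ρ_Sep` have orthogonal supports, so for
positive semidefinite `P, Q` with `P Q = 0` we get `(P - Q)ᴴ (P - Q) = (P + Q)²` and hence
`tr|P - Q| = tr P + tr Q`. Therefore the flagged state `ρ` with weight
`η = min(ε, ε / D_tr(ρ_Ent, ρ_Sep))` is at trace distance exactly `η ≤ ε` from the separable
state `|1⟩⟨1| ⊗ ρ_Sep`, which forces `E_ε(ρ) = 0`, while the average after measuring the flag is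
`η E_ε(ρ_Ent) > 0`. -/

open Matrix

section
variable {n : Type*} [Fintype n] [DecidableEq n]

lemma traceNorm_eq_re_trace_cfc_sqrt (A : Matrix n n ℂ) :
    traceNorm A = (cfc Real.sqrt (Aᴴ * A)).trace.re := by
  rw [(posSemidef_conjTranspose_mul_self A).1.cfc_eq, IsHermitian.cfc, Unitary.conjStarAlgAut_apply]
  rfl

open scoped MatrixOrder in
lemma traceNorm_eq_re_trace_of_conjTranspose_mul_self_eq {A S : Matrix n n ℂ} (hS : S.PosSemidef)
    (h : Aᴴ * A = S * S) : traceNorm A = S.trace.re := by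
  rw [traceNorm_eq_re_trace_cfc_sqrt, h, ← cfcₙ_eq_cfc (hf0 := Real.sqrt_zero),
    ← CFC.sqrt_eq_real_sqrt _ (h ▸ (posSemidef_conjTranspose_mul_self A).nonneg),
    CFC.sqrt_mul_self S hS.nonneg]

lemma traceNorm_sub_of_mul_eq_zero {P Q : Matrix n n ℂ} (hP : P.PosSemidef) (hQ : Q.PosSemidef)
    (hPQ : P * Q = 0) : traceNorm (P - Q) = (P.trace + Q.trace).re := by
  have hQP : Q * P = 0 := by
    rw [← hQ.1.eq, ← hP.1.eq, ← conjTranspose_mul, hPQ, conjTranspose_zero]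
  rw [← trace_add]
  apply traceNorm_eq_re_trace_of_conjTranspose_mul_self_eq (hP.add hQ)
  rw [conjTranspose_sub, hP.1.eq, hQ.1.eq]
  simp only [sub_mul, mul_sub, add_mul, mul_add, hPQ, hQP]
  abel

end

section
variable {m n : Type*} [Fintype m] [DecidableEq m] [Fintype n]

lemma posSemidef_single_kronecker (i : m) {A : Matrix n n ℂ} (hA : A.PosSemidef) :
    (single i i (1 : ℂ) ⊗ₖ A).PosSemidef := by
  refine PosSemidef.kronecker ?_ hA
  rw [← diagonal_single]
  exact .diagonal (Pi.single_nonneg.mpr zero_le_one)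

lemma single_kronecker_mul_single_kronecker_of_ne {i j : m} (hij : i ≠ j) (A B : Matrix n n ℂ) :
    (single i i (1 : ℂ) ⊗ₖ A) * (single j j (1 : ℂ) ⊗ₖ B) = 0 := by
  rw [← mul_kronecker_mul, single_mul_single_of_ne _ i i j hij, zero_kronecker]

lemma traceDist_flagged_mixture [DecidableEq n] {i j : m} (hij : i ≠ j) {A B : Matrix n n ℂ}
    (hA : A.PosSemidef) (hAtr : A.trace = 1) (hB : B.PosSemidef) (hBtr : B.trace = 1)
    {η : ℝ} (hη : 0 ≤ η) :
    traceDist ((η : ℂ) • (single i i (1 : ℂ) ⊗ₖ A) + ((1 - η : ℝ) : ℂ) • (single j j (1 : ℂ) ⊗ₖ B))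
      (single j j (1 : ℂ) ⊗ₖ B) = η := by
  have hdiff : (η : ℂ) • (single i i (1 : ℂ) ⊗ₖ A) + ((1 - η : ℝ) : ℂ) • (single j j (1 : ℂ) ⊗ₖ B)
      - single j j (1 : ℂ) ⊗ₖ B
      = (η : ℂ) • (single i i (1 : ℂ) ⊗ₖ A) - (η : ℂ) • (single j j (1 : ℂ) ⊗ₖ B) := by
    push_cast
    module
  have hηc : (0 : ℂ) ≤ η := Complex.zero_le_real.mpr hη
  rw [traceDist, hdiff, traceNorm_sub_of_mul_eq_zero ((posSemidef_single_kronecker i hA).smul hηc)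
    ((posSemidef_single_kronecker j hB).smul hηc)
    (by rw [smul_mul_smul_comm, single_kronecker_mul_single_kronecker_of_ne hij, smul_zero])]
  simp [trace_kronecker, hAtr, hBtr]
end

/-- Failure of monotonicity on average: there exists a state
`ρ = η|0⟩⟨0|⊗ρ_Ent + (1−η)|1⟩⟨1|⊗ρ_Sep` with `η ≤ ε / D_tr(ρ_Ent,ρ_Sep)` such that
`E_ε(ρ) = 0` (the separable state `|1⟩⟨1|⊗ρ_Sep` is within trace distance ε of ρ), while
the local measurement on the ancilla yields `ρ_Ent` with probability η and `ρ_Sep` with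
probability `1−η`, giving average ε-entanglement `η·E_ε(ρ_Ent) > 0`; hence
`Σᵢ pᵢ E_ε(ρᵢ) > E_ε(ρ)`. -/
theorem stmt18 {d : ℕ}
    (ρEnt ρSep : Matrix (Fin d) (Fin d) ℂ)
    (hEnt : ρEnt.PosSemidef) (hEnttr : ρEnt.trace = 1)
    (hSep : ρSep.PosSemidef) (hSeptr : ρSep.trace = 1)
    (Esys : Matrix (Fin d) (Fin d) ℂ → ℝ)
    (Ecomp : Matrix (Fin 2 × Fin d) (Fin 2 × Fin d) ℂ → ℝ)
    (ε : ℝ) (hε : 0 < ε)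
    (hEcompnn : ∀ τ, 0 ≤ Ecomp τ)
    (hEcompSep :
      Ecomp (Matrix.single (1 : Fin 2) (1 : Fin 2) (1 : ℂ) ⊗ₖ ρSep) = 0)
    (hEepsEntPos : 0 < sInf (Esys '' {σ | traceDist ρEnt σ ≤ ε}))
    (hEepsSep0 : sInf (Esys '' {σ | traceDist ρSep σ ≤ ε}) = 0)
    (hDpos : 0 < traceDist ρEnt ρSep) :
    ∃ η : ℝ, 0 < η ∧ η ≤ ε / traceDist ρEnt ρSep ∧
      sInf (Ecomp ''
          {σ | traceDist
            ((η : ℂ) • (Matrix.single (0 : Fin 2) (0 : Fin 2) (1 : ℂ) ⊗ₖ ρEnt) +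
              ((1 - η : ℝ) : ℂ) •
                (Matrix.single (1 : Fin 2) (1 : Fin 2) (1 : ℂ) ⊗ₖ ρSep)) σ ≤ ε})
        = 0 ∧
      η * sInf (Esys '' {σ | traceDist ρEnt σ ≤ ε}) +
          (1 - η) * sInf (Esys '' {σ | traceDist ρSep σ ≤ ε}) >
        sInf (Ecomp ''
          {σ | traceDist
            ((η : ℂ) • (Matrix.single (0 : Fin 2) (0 : Fin 2) (1 : ℂ) ⊗ₖ ρEnt) +
              ((1 - η : ℝ) : ℂ) •
                (Matrix.single (1 : Fin 2) (1 : Fin 2) (1 : ℂ) ⊗ₖ ρSep)) σ ≤ ε}) := by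
  have hη : 0 < min ε (ε / traceDist ρEnt ρSep) := lt_min hε (div_pos hε hDpos)
  set η := min ε (ε / traceDist ρEnt ρSep)
  have hEcomp0 : ∀ ρ, traceDist ρ (single 1 1 (1 : ℂ) ⊗ₖ ρSep) ≤ ε →
      sInf (Ecomp '' {σ | traceDist ρ σ ≤ ε}) = 0 := fun ρ hρ =>
    IsLeast.csInf_eq ⟨⟨_, hρ, hEcompSep⟩, by rintro _ ⟨τ, -, rfl⟩; exact hEcompnn τ⟩
  refine ⟨η, hη, min_le_right _ _, ?_⟩
  rw [hEcomp0 _ ((traceDist_flagged_mixture Fin.zero_ne_one hEnt hEnttr hSep hSeptr hη.le).trans_le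
    (min_le_left _ _)), hEepsSep0]
  exact ⟨rfl, by simpa using mul_pos hη hEepsEntPos⟩
end
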